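/- arXiv:2507.08714 — 2 statements merged into one kernel-verified Lean document; each statement's English description precedes it below -/
import Mathlib

section
/- For g ≥ 2, any seed α ∈ 𝒜_g, indices i, j ≥ 0, and any β ∈ ℝ: (φ_i^{[j]}(β g^i)·φ_{i+1}^{[j]}(β g^{i+1}))^{1/2} ≤ g^{1 − γ_i^{[j]}(α)}, where φ_i^{[j]}(β) := |Σ_{0≤n<g} e(α_{i+j}(n) − βn)| and γ_i^{[j]}(α) := (2 log 2)/((g−1)g⁴(log g)²) Σ_{0≤m<n<g} ‖(g α_{i+j}(m) − α_{i+j+1}(m)) − (g α_{i+j}(n) − α_{i+j+1}(n))‖². -/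
/-- `e(t) = exp(2πit)`. -/
noncomputable def eC (t : ℝ) : ℂ := Complex.exp (2 * (Real.pi : ℂ) * Complex.I * (t : ℂ))

/-- `φ_i^{[j]}(β) = |Σ_{0≤n<g} e(α_{i+j}(n) − βn)|`. -/
noncomputable def phi (g : ℕ) (α : ℕ → ℕ → ℝ) (i j : ℕ) (β : ℝ) : ℝ :=
  ‖∑ n ∈ Finset.range g, eC (α (i + j) n - β * n)‖

/-- Distance from `x` to the nearest integer. -/
noncomputable def nint (x : ℝ) : ℝ := |x - round x|

/-- The quantity `γ_i^{[j]}(α)`. -/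
noncomputable def gam (g : ℕ) (α : ℕ → ℕ → ℝ) (i j : ℕ) : ℝ :=
  (2 * Real.log 2) / (((g : ℝ) - 1) * (g : ℝ) ^ 4 * (Real.log g) ^ 2) *
    ∑ n ∈ Finset.range g, ∑ m ∈ Finset.range n,
      nint (((g : ℝ) * α (i + j) m - α (i + j + 1) m) -
        ((g : ℝ) * α (i + j) n - α (i + j + 1) n)) ^ 2

open Real Finset

/-!
Write `x n = α_{i+j}(n) - β gⁱ n` and `y n = α_{i+j+1}(n) - β gⁱ⁺¹ n`, so that the two factors
are `A = |∑ e(x n)|` and `B = |∑ e(y n)|`, and `g x - y` is exactly the sequence whose pair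
differences enter `γ`. Expanding `A²` as a double sum of `cos 2π(x m - x n)` and using
`cos 2πt ≤ 1 - 8‖t‖²` gives `16 ∑_{m<n} ‖x m - x n‖² ≤ g² - A² ≤ 2 g² log (g / A)`, and likewise
for `y`. Since `‖g a - b‖ ≤ g ‖a‖ + ‖b‖`, the pair sum of `g x - y` is controlled by those of
`x` and `y`, hence by `log (g / A) + log (g / B)`, which is the claimed bound after exponentiating.
-/

lemma nint_nonneg (x : ℝ) : 0 ≤ nint x := abs_nonneg _

lemma nint_le_abs_sub_intCast (x : ℝ) (k : ℤ) : nint x ≤ |x - k| := round_le x k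

lemma nint_neg (x : ℝ) : nint (-x) = nint x := by
  have key (t : ℝ) : nint (-t) ≤ nint t := by
    calc nint (-t) ≤ |-t - ((-round t : ℤ) : ℝ)| := nint_le_abs_sub_intCast _ _
      _ = nint t := by rw [nint, ← abs_neg]; push_cast; ring_nf
  exact le_antisymm (key x) (by simpa using key (-x))

lemma nint_add_le (x y : ℝ) : nint (x + y) ≤ nint x + nint y :=
  calc nint (x + y) ≤ |x + y - ((round x + round y : ℤ) : ℝ)| := nint_le_abs_sub_intCast _ _
    _ = |(x - round x) + (y - round y)| := by push_cast; ring_nf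
    _ ≤ nint x + nint y := abs_add_le _ _

lemma nint_sub_le (x y : ℝ) : nint (x - y) ≤ nint x + nint y := by
  simpa [sub_eq_add_neg, nint_neg] using nint_add_le x (-y)

lemma nint_natCast_mul_le (n : ℕ) (x : ℝ) : nint (n * x) ≤ n * nint x :=
  calc nint (n * x) ≤ |n * x - ((n * round x : ℤ) : ℝ)| := nint_le_abs_sub_intCast _ _
    _ = n * nint x := by push_cast; rw [← mul_sub, abs_mul, Nat.abs_cast]; rfl

lemma cos_two_pi_mul_le (t : ℝ) : cos (2 * π * t) ≤ 1 - 8 * nint t ^ 2 := by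
  have hcos : cos (2 * π * t) = cos (2 * π * (t - round t)) := by
    rw [show 2 * π * (t - round t) = 2 * π * t - round t * (2 * π) by ring, cos_sub_int_mul_two_pi]
  have habs : |2 * π * (t - round t)| ≤ π := by
    rw [abs_mul, abs_of_pos (by positivity : 0 < 2 * π)]
    nlinarith [abs_sub_round t, pi_pos]
  rw [hcos]
  refine (cos_le_one_sub_mul_cos_sq habs).trans_eq ?_
  rw [nint, sq_abs]
  field_simp
  ring

lemma norm_eC (t : ℝ) : ‖eC t‖ = 1 := by
  rw [eC, show 2 * (π : ℂ) * Complex.I * t = ((2 * π * t : ℝ) : ℂ) * Complex.I by push_cast; ring,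
    Complex.norm_exp_ofReal_mul_I]

lemma re_eC (t : ℝ) : (eC t).re = cos (2 * π * t) := by
  rw [eC, show 2 * (π : ℂ) * Complex.I * t = ((2 * π * t : ℝ) : ℂ) * Complex.I by push_cast; ring,
    Complex.exp_ofReal_mul_I_re]

lemma eC_mul_conj (s t : ℝ) : eC s * starRingEnd ℂ (eC t) = eC (s - t) := by
  rw [eC, eC, eC, ← Complex.exp_conj, ← Complex.exp_add]
  congr 1
  simp only [map_mul, map_ofNat, Complex.conj_ofReal, Complex.conj_I]
  push_cast
  ring

lemma sq_norm_sum_eC {ι : Type*} (s : Finset ι) (x : ι → ℝ) :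
    ‖∑ n ∈ s, eC (x n)‖ ^ 2 = ∑ m ∈ s, ∑ n ∈ s, cos (2 * π * (x m - x n)) := by
  rw [← Complex.ofReal_re (‖_‖ ^ 2), Complex.ofReal_pow, ← Complex.mul_conj', map_sum, sum_mul_sum, Complex.re_sum]
  simp only [Complex.re_sum, eC_mul_conj, re_eC]

lemma two_mul_sum_range_lt_le {f : ℕ → ℕ → ℝ} (hdiag : ∀ n, 0 ≤ f n n)
    (hsymm : ∀ m n, f m n = f n m) (g : ℕ) :
    2 * ∑ n ∈ range g, ∑ m ∈ range n, f m n ≤ ∑ m ∈ range g, ∑ n ∈ range g, f m n := by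
  induction g with
  | zero => simp
  | succ g ih =>
    have hsplit : ∑ m ∈ range (g + 1), ∑ n ∈ range (g + 1), f m n
        = ∑ m ∈ range g, ∑ n ∈ range g, f m n + 2 * ∑ m ∈ range g, f m g + f g g := by
      simp only [sum_range_succ, sum_add_distrib, hsymm g]
      ring
    rw [sum_range_succ, hsplit]
    linarith [hdiag g]

noncomputable def pairSum (g : ℕ) (x : ℕ → ℝ) : ℝ :=
  ∑ n ∈ range g, ∑ m ∈ range n, nint (x m - x n) ^ 2

lemma pairSum_nonneg (g : ℕ) (x : ℕ → ℝ) : 0 ≤ pairSum g x := by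
  unfold pairSum; positivity

lemma sixteen_mul_pairSum_le (g : ℕ) (x : ℕ → ℝ) :
    16 * pairSum g x ≤ g ^ 2 - ‖∑ n ∈ range g, eC (x n)‖ ^ 2 := by
  have hsymm (m n : ℕ) : nint (x m - x n) ^ 2 = nint (x n - x m) ^ 2 := by
    rw [← neg_sub, nint_neg]
  have hpairs := two_mul_sum_range_lt_le (fun n => sq_nonneg (nint (x n - x n))) hsymm g
  have hcos : ∑ m ∈ range g, ∑ n ∈ range g, cos (2 * π * (x m - x n))
      ≤ ∑ m ∈ range g, ∑ n ∈ range g, (1 - 8 * nint (x m - x n) ^ 2) :=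
    sum_le_sum fun m _ => sum_le_sum fun n _ => cos_two_pi_mul_le _
  simp only [sum_sub_distrib, ← mul_sum, sum_const, card_range, nsmul_eq_mul, mul_one] at hcos
  rw [sq_norm_sum_eC, pairSum]
  nlinarith

lemma sq_sub_sq_le_log {a b : ℝ} (ha : 0 < a) (hb : 0 < b) :
    b ^ 2 - a ^ 2 ≤ 2 * b ^ 2 * (log b - log a) := by
  have h := log_le_sub_one_of_pos (pow_pos (div_pos ha hb) 2)
  rw [log_pow, log_div ha.ne' hb.ne', div_pow, le_sub_iff_add_le, le_div_iff₀ (by positivity)] at h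
  push_cast at h
  linarith

lemma eight_mul_pairSum_le_log (g : ℕ) (x : ℕ → ℝ) (hx : 0 < ‖∑ n ∈ range g, eC (x n)‖) :
    8 * pairSum g x ≤ g ^ 2 * (log g - log ‖∑ n ∈ range g, eC (x n)‖) := by
  have hg : (0 : ℝ) < g := by
    rcases Nat.eq_zero_or_pos g with rfl | hg
    · simp at hx
    · exact_mod_cast hg
  linarith [sixteen_mul_pairSum_le g x, sq_sub_sq_le_log hx hg]

lemma nint_natCast_mul_sub_sq_le {n : ℕ} (hn : 1 ≤ n) (a b : ℝ) :
    nint (n * a - b) ^ 2 ≤ 2 * n ^ 2 * (nint a ^ 2 + nint b ^ 2) := by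
  have hn' : (1 : ℝ) ≤ n ^ 2 := one_le_pow₀ (by exact_mod_cast hn)
  have h : nint (n * a - b) ≤ n * nint a + nint b :=
    (nint_sub_le _ _).trans (add_le_add_left (nint_natCast_mul_le n a) _)
  calc nint (n * a - b) ^ 2 ≤ (n * nint a + nint b) ^ 2 := pow_le_pow_left₀ (nint_nonneg _) h 2
    _ ≤ 2 * ((n * nint a) ^ 2 + nint b ^ 2) := add_sq_le
    _ ≤ 2 * n ^ 2 * (nint a ^ 2 + nint b ^ 2) := by
        nlinarith [mul_le_mul_of_nonneg_right hn' (sq_nonneg (nint b))]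

lemma pairSum_natCast_mul_sub_le (g : ℕ) {n : ℕ} (hn : 1 ≤ n) (x y : ℕ → ℝ) :
    pairSum g (fun k => n * x k - y k) ≤ 2 * n ^ 2 * (pairSum g x + pairSum g y) := by
  rw [pairSum, pairSum, pairSum, ← sum_add_distrib, mul_sum]
  gcongr with k _
  rw [← sum_add_distrib, mul_sum]
  gcongr with l _
  rw [show n * x l - y l - (n * x k - y k) = n * (x l - x k) - (y l - y k) by ring]
  exact nint_natCast_mul_sub_sq_le hn _ _

lemma gam_mul_log_le {g : ℕ} (hg : 2 ≤ g) (α : ℕ → ℕ → ℝ) (i j : ℕ) {T : ℝ} (hT : 0 ≤ T)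
    (h : pairSum g (fun n => g * α (i + j) n - α (i + j + 1) n) ≤ g ^ 4 * T / 4) :
    gam g α i j * log g ≤ T / 2 := by
  have hg2 : (2 : ℝ) ≤ g := by exact_mod_cast hg
  have hlog2 : 0 < log 2 := log_pos one_lt_two
  have hlog : log 2 ≤ log g := log_le_log two_pos hg2
  have hlog2g : log 2 ≤ (g - 1) * log g := by nlinarith
  have hc : 0 ≤ 2 * log 2 / ((g - 1) * g ^ 4 * log g ^ 2) := by
    have : (0 : ℝ) < g - 1 := by linarith
    positivity
  calc gam g α i j * log g
      ≤ 2 * log 2 / ((g - 1) * g ^ 4 * log g ^ 2) * (g ^ 4 * T / 4) * log g := by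
        have hgam : gam g α i j = 2 * log 2 / ((g - 1) * g ^ 4 * log g ^ 2) *
            pairSum g (fun n => g * α (i + j) n - α (i + j + 1) n) := rfl
        rw [hgam]
        gcongr
    _ = log 2 / ((g - 1) * log g) * (T / 2) := by
        field_simp
        ring
    _ ≤ 1 * (T / 2) := by
        gcongr
        rw [div_le_one (by nlinarith)]
        exact hlog2g
    _ = T / 2 := one_mul _

lemma sqrt_mul_le_rpow {a b c γ : ℝ} (ha : 0 < a) (hb : 0 < b) (hc : 0 < c)
    (h : 2 * (γ * log c) ≤ (log c - log a) + (log c - log b)) :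
    √(a * b) ≤ c ^ (1 - γ) := by
  rw [sqrt_le_left (rpow_nonneg hc.le _), ← log_le_log_iff (by positivity) (by positivity),
    log_mul ha.ne' hb.ne', log_pow, log_rpow hc]
  push_cast
  linarith

theorem consecutive_phi (g : ℕ) (hg : 2 ≤ g) (α : ℕ → ℕ → ℝ) (i j : ℕ) (β : ℝ) :
    Real.sqrt (phi g α i j (β * (g : ℝ) ^ i) * phi g α (i + 1) j (β * (g : ℝ) ^ (i + 1))) ≤
      (g : ℝ) ^ (1 - gam g α i j) := by
  set x : ℕ → ℝ := fun n => α (i + j) n - β * g ^ i * n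
  set y : ℕ → ℝ := fun n => α (i + j + 1) n - β * g ^ (i + 1) * n
  have hA : phi g α i j (β * g ^ i) = ‖∑ n ∈ range g, eC (x n)‖ := rfl
  have hB : phi g α (i + 1) j (β * g ^ (i + 1)) = ‖∑ n ∈ range g, eC (y n)‖ := by
    rw [phi, Nat.add_right_comm]
  have hxy : (fun n => g * α (i + j) n - α (i + j + 1) n) = fun n => g * x n - y n := by
    ext n; simp only [x, y, pow_succ]; ring
  rw [hA, hB]
  set A := ‖∑ n ∈ range g, eC (x n)‖
  set B := ‖∑ n ∈ range g, eC (y n)‖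
  obtain hA0 | hA0 : 0 = A ∨ 0 < A := (norm_nonneg _).eq_or_lt
  · rw [← hA0, zero_mul, sqrt_zero]; positivity
  obtain hB0 | hB0 : 0 = B ∨ 0 < B := (norm_nonneg _).eq_or_lt
  · rw [← hB0, mul_zero, sqrt_zero]; positivity
  have hg2 : (0 : ℝ) < g ^ 2 := by positivity
  have hx := eight_mul_pairSum_le_log g x hA0
  have hy := eight_mul_pairSum_le_log g y hB0
  have hx0 := pairSum_nonneg g x
  have hy0 := pairSum_nonneg g y
  have hT : 0 ≤ (log g - log A) + (log g - log B) := by nlinarith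
  refine sqrt_mul_le_rpow hA0 hB0 (by positivity) ?_
  refine (mul_le_mul_of_nonneg_left (gam_mul_log_le hg α i j hT ?_) zero_le_two).trans_eq (by ring)
  rw [hxy]
  refine (pairSum_natCast_mul_sub_le g (by omega) x y).trans ?_
  nlinarith
end

section
/- Let g ≥ 2, let r ∈ ℤ_{≥0}, and M, N, R ∈ ℝ_{≥1} with 0 ≤ r ≤ R and R ≤ N^{1/2}. Choose λ ∈ ℕ with g^{λ−1} ≤ MR² < g^λ and assume λ ≤ L. Then the set ℰ of pairs (m,n) ∈ ℕ² with M < m ≤ 2M, N < n ≤ 2N for which f_L(m(n+r)) − f_L(mn) ≠ f_λ(m(n+r)) − f_λ(mn) has cardinality #ℰ ≤ C_g·MN/R, where C_g depends only on g. (Here f_μ(x) := Σ_{0≤i<μ} α_i(ε_i(x)) for any seed α ∈ 𝒜_g, and the key point is that membership in ℰ forces an integer k with mn < k g^λ ≤ m(n+r).) -/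
/-- The `i`-th base-`g` digit of `n`. -/
noncomputable def eps (g n i : ℕ) : ℕ := n / g ^ i % g

/-- The weakly digital function `f_μ` generated by the seed `α`. -/
noncomputable def wdf (g : ℕ) (α : ℕ → ℕ → ℝ) (μ n : ℕ) : ℝ :=
  ∑ i ∈ Finset.range μ, α i (eps g n i)

/-!
The digits of `x` of index `≥ λ` depend only on `x / g ^ λ`, so `f_L - f_λ` takes the same value
at `mn` and `m(n + r)` unless a multiple `k g ^ λ` lies in `(mn, m(n + r)]`. For fixed `m` such a
`k` leaves at most `r` choices of `n`, and only about `m N / g ^ λ + 1 ≤ 2N / R² + 1` values of `k`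
are possible. Summing over the `≈ M` values of `m` gives `≪ M r (N / R² + 1) ≤ M N / R`, using
`r ≤ R ≤ N / R`.
-/

open Finset

lemma eps_eq_of_div_pow_eq {g k x y : ℕ} (h : x / g ^ k = y / g ^ k) {i : ℕ} (hi : k ≤ i) :
    eps g x i = eps g y i := by
  obtain ⟨j, rfl⟩ := Nat.exists_eq_add_of_le hi
  simp only [eps, pow_add, ← Nat.div_div_eq_div_mul, h]

lemma wdf_sub_wdf (g : ℕ) (α : ℕ → ℕ → ℝ) {lam L : ℕ} (h : lam ≤ L) (x : ℕ) :
    wdf g α L x - wdf g α lam x = ∑ i ∈ Ico lam L, α i (eps g x i) := by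
  rw [wdf, wdf, ← sum_range_add_sum_Ico _ h, add_sub_cancel_left]

lemma div_pow_lt_div_pow_of_wdf_sub_ne (g : ℕ) (α : ℕ → ℕ → ℝ) {lam L x y : ℕ} (hL : lam ≤ L)
    (hxy : x ≤ y) (hne : wdf g α L y - wdf g α L x ≠ wdf g α lam y - wdf g α lam x) :
    x / g ^ lam < y / g ^ lam := by
  refine (Nat.div_le_div_right hxy).lt_of_ne fun h ↦ hne ?_
  have hsum : ∑ i ∈ Ico lam L, α i (eps g y i) = ∑ i ∈ Ico lam L, α i (eps g x i) :=
    sum_congr rfl fun i hi ↦ by rw [eps_eq_of_div_pow_eq h (mem_Ico.mp hi).1]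
  linarith [wdf_sub_wdf g α hL x, wdf_sub_wdf g α hL y]

lemma card_filter_div_lt_div_le {m G : ℕ} (hm : 0 < m) (hG : 0 < G) (r a b : ℕ) :
    #{n ∈ Ioc a b | m * n / G < m * (n + r) / G} ≤ r * (m * (b + r) / G - m * a / G) := by
  refine card_le_mul_card_image_of_maps_to (f := fun n ↦ m * (n + r) / G)
    (t := Ioc (m * a / G) (m * (b + r) / G)) ?_ r ?_ |>.trans (by rw [Nat.card_Ioc])
  · intro n hn
    simp only [mem_filter, mem_Ioc] at hn ⊢
    exact ⟨(Nat.div_le_div_right (by gcongr; omega)).trans_lt hn.2,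
      Nat.div_le_div_right (by gcongr; omega)⟩
  · intro k _
    -- `n` lies in the fibre over `k` iff `m * n < k * G ≤ m * (n + r)`, i.e. `q - r < n ≤ q`
    set q := (k * G - 1) / m
    refine (card_le_card fun n hn ↦ ?_).trans (Nat.card_Ioc (q - r) q).le |>.trans (by omega)
    simp only [mem_filter, mem_Ioc] at hn ⊢
    obtain ⟨⟨⟨han, -⟩, hcarry⟩, rfl⟩ := hn
    have hle := Nat.div_mul_le_self (m * (n + r)) G
    have hlt := (Nat.div_lt_iff_lt_mul hG).mp hcarry
    have hq_lt : q < n + r := (Nat.div_lt_iff_lt_mul hm).mpr (by rw [mul_comm (n + r)]; omega)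
    have hn_le : n ≤ q := (Nat.le_div_iff_mul_le hm).mpr (by rw [mul_comm n]; omega)
    omega

lemma natCast_floor_sub_floor_le {x y : ℝ} (hx : 0 ≤ x) (hxy : x ≤ y) :
    ((⌊y⌋₊ - ⌊x⌋₊ : ℕ) : ℝ) ≤ y - x + 1 := by
  rw [Nat.cast_sub (Nat.floor_le_floor hxy)]
  linarith [Nat.floor_le (hx.trans hxy), Nat.sub_one_lt_floor x]

lemma natCast_card_filter_div_lt_div_le {m G : ℕ} (hm : 0 < m) (hG : 0 < G) (r : ℕ) {N : ℝ}
    (hN : 0 ≤ N) :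
    (#{n ∈ Ioc ⌊N⌋₊ ⌊2 * N⌋₊ | m * n / G < m * (n + r) / G} : ℝ) ≤
      r * (m * (N + 1 + r) / G + 1) := by
  set a := ⌊N⌋₊
  set b := ⌊2 * N⌋₊
  have hab : (b : ℝ) - a ≤ N + 1 := by
    linarith [Nat.floor_le (by positivity : 0 ≤ 2 * N), Nat.sub_one_lt_floor N]
  have hquot : ((m * (b + r) / G - m * a / G : ℕ) : ℝ) ≤ (m * (b + r) - m * a) / G + 1 := by
    have h := natCast_floor_sub_floor_le (x := ((m * a : ℕ) : ℝ) / G)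
      (y := ((m * (b + r) : ℕ) : ℝ) / G) (by positivity)
      (by gcongr; have : a ≤ b := Nat.floor_le_floor (by linarith); omega)
    rw [Nat.floor_div_eq_div, Nat.floor_div_eq_div] at h
    push_cast at h
    rwa [sub_div]
  calc (#{n ∈ Ioc a b | m * n / G < m * (n + r) / G} : ℝ)
      ≤ ((r * (m * (b + r) / G - m * a / G) : ℕ) : ℝ) := by
        exact_mod_cast card_filter_div_lt_div_le hm hG r a b
    _ ≤ r * (m * (N + 1 + r) / G + 1) := by
        push_cast
        gcongr
        refine hquot.trans ?_
        rw [← mul_sub]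
        gcongr
        linarith

lemma natCast_card_filter_prod_div_lt_div_le {G : ℕ} (hG : 0 < G) (r : ℕ) {M N : ℝ}
    (hM : 0 ≤ M) (hN : 0 ≤ N) :
    (#{p ∈ Ioc ⌊M⌋₊ ⌊2 * M⌋₊ ×ˢ Ioc ⌊N⌋₊ ⌊2 * N⌋₊ | p.1 * p.2 / G < p.1 * (p.2 + r) / G} : ℝ) ≤
      (M + 1) * (r * (2 * M * (N + 1 + r) / G + 1)) := by
  have hrow : ∀ m ∈ Ioc ⌊M⌋₊ ⌊2 * M⌋₊,
      (#{n ∈ Ioc ⌊N⌋₊ ⌊2 * N⌋₊ | m * n / G < m * (n + r) / G} : ℝ) ≤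
        r * (2 * M * (N + 1 + r) / G + 1) := by
    intro m hm
    rw [mem_Ioc] at hm
    refine (natCast_card_filter_div_lt_div_le (by omega) hG r hN).trans ?_
    gcongr
    exact Nat.le_floor_iff (by positivity) |>.mp hm.2
  calc (#{p ∈ Ioc ⌊M⌋₊ ⌊2 * M⌋₊ ×ˢ Ioc ⌊N⌋₊ ⌊2 * N⌋₊ | p.1 * p.2 / G < p.1 * (p.2 + r) / G} : ℝ)
      = ∑ m ∈ Ioc ⌊M⌋₊ ⌊2 * M⌋₊, (#{n ∈ Ioc ⌊N⌋₊ ⌊2 * N⌋₊ | m * n / G < m * (n + r) / G} : ℝ) := by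
        simp only [card_filter, sum_product, Nat.cast_sum]
    _ ≤ #(Ioc ⌊M⌋₊ ⌊2 * M⌋₊) * (r * (2 * M * (N + 1 + r) / G + 1)) := by
        simpa using sum_le_sum hrow
    _ ≤ (M + 1) * (r * (2 * M * (N + 1 + r) / G + 1)) := by
        gcongr
        rw [Nat.card_Ioc]
        linarith [natCast_floor_sub_floor_le hM (by linarith : M ≤ 2 * M)]

lemma carry_count_bound_le {M N R r G : ℝ} (hM : 1 ≤ M) (hR : 1 ≤ R) (hr0 : 0 ≤ r) (hr : r ≤ R)
    (hRN : R ^ 2 ≤ N) (hG : M * R ^ 2 < G) :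
    (M + 1) * (r * (2 * M * (N + 1 + r) / G + 1)) ≤ 14 * M * N / R := by
  have hR2 : 0 < M * R ^ 2 := by positivity
  have hG0 : 0 < G := hR2.trans hG
  have hN0 : 0 ≤ N := (sq_nonneg R).trans hRN
  have hfrac : 2 * M * (N + 1 + r) / G ≤ 2 * (N + 1 + R) / R ^ 2 := calc
    2 * M * (N + 1 + r) / G ≤ 2 * M * (N + 1 + R) / (M * R ^ 2) := by
      gcongr
    _ = 2 * (N + 1 + R) / R ^ 2 := by field_simp
  have hinner : r * (2 * M * (N + 1 + r) / G + 1) ≤ 7 * N / R := calc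
    r * (2 * M * (N + 1 + r) / G + 1) ≤ R * (2 * (N + 1 + R) / R ^ 2 + 1) := by
      gcongr
    _ = (2 * (N + 1 + R) + R ^ 2) / R := by field_simp
    _ ≤ 7 * N / R := by gcongr; nlinarith
  calc (M + 1) * (r * (2 * M * (N + 1 + r) / G + 1)) ≤ (2 * M) * (7 * N / R) := by
        gcongr; linarith
    _ = 14 * M * N / R := by ring

theorem truncation_general (g : ℕ) :
    ∃ C : ℝ, 0 < C ∧ ∀ (α : ℕ → ℕ → ℝ) (L : ℕ) (r : ℕ) (M N R : ℝ) (lam : ℕ),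
      1 ≤ M → 1 ≤ N → 1 ≤ R → (r : ℝ) ≤ R → R ≤ Real.sqrt N →
      1 ≤ lam → (g : ℝ) ^ (lam - 1) ≤ M * R ^ 2 → M * R ^ 2 < (g : ℝ) ^ lam → lam ≤ L →
      (Set.ncard {p : ℕ × ℕ | M < p.1 ∧ (p.1 : ℝ) ≤ 2 * M ∧ N < p.2 ∧ (p.2 : ℝ) ≤ 2 * N ∧
          wdf g α L (p.1 * (p.2 + r)) - wdf g α L (p.1 * p.2) ≠
            wdf g α lam (p.1 * (p.2 + r)) - wdf g α lam (p.1 * p.2)} : ℝ) ≤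
        C * M * N / R := by
  refine ⟨14, by norm_num, fun α L r M N R lam hM _ hR hrR hRN _ _ hG hL ↦ ?_⟩
  have hRN : R ^ 2 ≤ N := (Real.le_sqrt' (by linarith)).mp hRN
  have hN : 0 ≤ N := (sq_nonneg R).trans hRN
  rw [← Nat.cast_pow] at hG
  have hG0 : 0 < g ^ lam := by exact_mod_cast (by positivity : 0 < M * R ^ 2).trans hG
  calc _ ≤ (#{p ∈ Ioc ⌊M⌋₊ ⌊2 * M⌋₊ ×ˢ Ioc ⌊N⌋₊ ⌊2 * N⌋₊ |
          p.1 * p.2 / g ^ lam < p.1 * (p.2 + r) / g ^ lam} : ℝ) := by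
        norm_cast
        refine (Set.ncard_le_ncard ?_ (finite_toSet _)).trans_eq (Set.ncard_coe_finset _)
        rintro ⟨m, n⟩ ⟨hm, hm2, hn, hn2, hne⟩
        simp only [mem_coe, mem_filter, mem_product, mem_Ioc]
        exact ⟨⟨⟨(Nat.floor_lt (by linarith)).mpr hm, Nat.le_floor hm2⟩,
          ⟨(Nat.floor_lt hN).mpr hn, Nat.le_floor hn2⟩⟩,
          div_pow_lt_div_pow_of_wdf_sub_ne g α hL (by gcongr; omega) hne⟩
    _ ≤ (M + 1) * (r * (2 * M * (N + 1 + r) / ((g ^ lam : ℕ) : ℝ) + 1)) :=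
        natCast_card_filter_prod_div_lt_div_le hG0 r (by linarith) hN
    _ ≤ 14 * M * N / R := carry_count_bound_le hM hR (Nat.cast_nonneg r) hrR hRN hG

theorem truncation (g : ℕ) (hg : 2 ≤ g) :
    ∃ C : ℝ, 0 < C ∧ ∀ (α : ℕ → ℕ → ℝ) (L : ℕ) (r : ℕ) (M N R : ℝ) (lam : ℕ),
      1 ≤ M → 1 ≤ N → 1 ≤ R → (r : ℝ) ≤ R → R ≤ Real.sqrt N →
      1 ≤ lam → (g : ℝ) ^ (lam - 1) ≤ M * R ^ 2 → M * R ^ 2 < (g : ℝ) ^ lam → lam ≤ L →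
      (Set.ncard {p : ℕ × ℕ | M < p.1 ∧ (p.1 : ℝ) ≤ 2 * M ∧ N < p.2 ∧ (p.2 : ℝ) ≤ 2 * N ∧
          wdf g α L (p.1 * (p.2 + r)) - wdf g α L (p.1 * p.2) ≠
            wdf g α lam (p.1 * (p.2 + r)) - wdf g α lam (p.1 * p.2)} : ℝ) ≤
        C * M * N / R :=
  truncation_general g
end
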